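/- For every integer e ≥ 1, the σ-semilinear substitution F (determined by T ↦ T^p) is a ring endomorphism of B(k)[[T]] that maps R̃e(k) into R̃e(k) and Re(k) into Re(k); moreover its restriction Φ to either piano ring is a Frobenius lift: Φ(f) − f^p ∈ p·R̃e(k) for every f ∈ R̃e(k), and Φ(f) − f^p ∈ p·Re(k) for every f ∈ Re(k). -/

import Mathlib

/-!
Piano rings (A. Vasiu, "Shimura varieties and the Mumford–Tate conjecture", §2.1).

`W(k)` is the ring of `p`-typical Witt vectors of a perfect field `k` of characteristic `p`,
`B(k) = W(k)[1/p]` its fraction field.  For `e ≥ 1`, the piano ring `R̃e(k)` of resonance `e`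
consists of the power series `Σ aₙ Tⁿ ∈ B(k)[[T]]` with `aₙ ⬝ (⌊n/e⌋)! ∈ W(k)` for all `n`,
and the piano ring `Re(k)` of convergent resonance `e` consists of those for which moreover
`bₙ := aₙ ⬝ (⌊n/e⌋)!` converges `p`-adically to `0`.
-/

noncomputable section

open PowerSeries

variable (p : ℕ) [Fact p.Prime] (k : Type*) [Field k] [CharP k p] [PerfectRing k p]

/-- `x` lies in the canonical image of `W(k)` inside `B(k)`. -/
def InW (x : FractionRing (WittVector p k)) : Prop :=
  ∃ w : WittVector p k,
    algebraMap (WittVector p k) (FractionRing (WittVector p k)) w = x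

/-- The piano ring `R̃e(k)` of resonance `e`: power series `Σ aₙ Tⁿ` over `B(k)` with
`aₙ ⬝ (⌊n/e⌋)! ∈ W(k)` for all `n`. -/
def pianoTilde (e : ℕ) : Set (PowerSeries (FractionRing (WittVector p k))) :=
  {f | ∀ n : ℕ,
    InW p k (PowerSeries.coeff n f * (Nat.factorial (n / e) : FractionRing (WittVector p k)))}

/-- The piano ring `Re(k)` of convergent resonance `e`: power series `Σ aₙ Tⁿ` over `B(k)`
with `bₙ := aₙ ⬝ (⌊n/e⌋)! ∈ W(k)` for all `n` and `bₙ → 0` `p`-adically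
(for every `m` eventually `bₙ ∈ pᵐ W(k)`). -/
def pianoR (e : ℕ) : Set (PowerSeries (FractionRing (WittVector p k))) :=
  {f | (∀ n : ℕ,
      InW p k (PowerSeries.coeff n f * (Nat.factorial (n / e) : FractionRing (WittVector p k)))) ∧
    ∀ m : ℕ, ∃ N : ℕ, ∀ n ≥ N, ∃ w : WittVector p k,
      algebraMap (WittVector p k) (FractionRing (WittVector p k)) ((p : WittVector p k) ^ m * w)
        = PowerSeries.coeff n f * (Nat.factorial (n / e) : FractionRing (WittVector p k))}

/-- The Frobenius automorphism `σ` of `W(k)` extended to `B(k)`. -/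
def sigmaB : FractionRing (WittVector p k) ≃+* FractionRing (WittVector p k) :=
  IsFractionRing.ringEquivOfRingEquiv (WittVector.frobeniusEquiv p k)

/-- The `σ`-semilinear substitution `F : Σ aₙ Tⁿ ↦ Σ σ(aₙ) T^{pn}` on `B(k)[[T]]`. -/
def Fmap (f : PowerSeries (FractionRing (WittVector p k))) :
    PowerSeries (FractionRing (WittVector p k)) :=
  PowerSeries.mk fun n => if p ∣ n then sigmaB p k (PowerSeries.coeff (n / p) f) else 0

/-!
`F` is the coefficientwise Frobenius `σ` followed by the substitution `T ↦ T^p`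
(`PowerSeries.expand`), hence a ring endomorphism. Since `⌊i/e⌋! ⌊j/e⌋!` divides `⌊(i+j)/e⌋!`
and `⌊j/e⌋!` divides `⌊pj/e⌋!`, both piano rings are subrings of `B(k)[[T]]` stable under `F`.

For the Frobenius-lift property, the `n`-th coefficient of `F(f) - f^p` only depends on the
truncation of `f` in degrees `≤ n`, and the `f ∈ R̃e(k)` with `F(f) ≡ f^p mod p R̃e(k)` are closed
under sums because `(u + v)^p ≡ u^p + v^p mod p`. So it suffices to treat a monomial `a T^j`
with `a ⬝ t! ∈ W(k)`, `t = ⌊j/e⌋`: for `t = 0` this is the congruence `σ(b) ≡ b^p mod p` in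
`W(k)`, and for `t ≥ 1` the factor `p ⬝ (t!)^p` of `⌊pj/e⌋!` absorbs the denominators. For
`Re(k)`, `p⁻¹ (F(f) - f^p)` inherits the `p`-adic convergence of `F(f) - f^p ∈ Re(k)`.
-/

open Finset
open scoped Nat

theorem Nat.factorial_div_mul_factorial_div_dvd (i j e : ℕ) :
    (i / e)! * (j / e)! ∣ ((i + j) / e)! :=
  (Nat.factorial_mul_factorial_dvd_factorial_add _ _).trans
    (Nat.factorial_dvd_factorial Nat.div_add_div_le_add_div)

theorem Nat.mul_factorial_pow_dvd_factorial_mul {n t : ℕ} (hn : 0 < n) (ht : t ≠ 0) :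
    n * t ! ^ n ∣ (n * t)! := by
  rw [← Nat.uniformBell_mul_eq n ht, mul_comm n]
  exact mul_dvd_mul (dvd_mul_left _ _) (Nat.dvd_factorial hn le_rfl)

theorem natCast_dvd_map_sum_sub_sum_pow {A ι : Type*} [CommRing A] {p : ℕ} (hp : p.Prime)
    (ψ : A →+ A) (s : Finset ι) (a : ι → A) (h : ∀ i ∈ s, (p : A) ∣ ψ (a i) - a i ^ p) :
    (p : A) ∣ ψ (∑ i ∈ s, a i) - (∑ i ∈ s, a i) ^ p := by
  refine Finset.sum_induction a (fun x => (p : A) ∣ ψ x - x ^ p) (fun x y hx hy => ?_)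
    (by simp [zero_pow hp.ne_zero]) h
  obtain ⟨r, hr⟩ := exists_add_pow_prime_eq hp x y
  have : ψ (x + y) - (x + y) ^ p = (ψ x - x ^ p) + (ψ y - y ^ p) - p * (x * y * r) := by
    rw [map_add, hr]; ring
  rw [this]
  exact dvd_sub (dvd_add hx hy) (dvd_mul_right _ _)

namespace PowerSeries

variable {R : Type*} [CommRing R]

theorem X_pow_dvd_sub_sum_monomial (f : R⟦X⟧) (n : ℕ) :
    X ^ n ∣ f - ∑ j ∈ range n, monomial j (coeff j f) := by
  refine X_pow_dvd_iff.mpr fun m hm => ?_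
  simp [coeff_monomial, hm]

theorem X_pow_dvd_map_sub_pow_sub_map_sub_pow (ψ : R⟦X⟧ →+* R⟦X⟧) (hψ : X ∣ ψ X) (q : ℕ)
    {n : ℕ} {f g : R⟦X⟧} (h : X ^ n ∣ f - g) :
    X ^ n ∣ (ψ f - f ^ q) - (ψ g - g ^ q) := by
  have hψn : X ^ n ∣ ψ (f - g) := by
    obtain ⟨c, hc⟩ := h
    rw [hc, map_mul, map_pow]
    exact dvd_mul_of_dvd_left (pow_dvd_pow_of_dvd hψ n) _
  have : (ψ f - f ^ q) - (ψ g - g ^ q) = ψ (f - g) - (f ^ q - g ^ q) := by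
    rw [map_sub]; ring
  rw [this]
  exact dvd_sub hψn (h.trans (sub_dvd_pow_sub_pow f g q))

end PowerSeries

theorem WittVector.natCast_dvd_frobenius_sub_pow {p : ℕ} [Fact p.Prime] {R : Type*} [CommRing R]
    [CharP R p] [PerfectRing R p] (x : WittVector p R) :
    (p : WittVector p R) ∣ frobenius x - x ^ p := by
  rw [← Ideal.mem_span_singleton, mem_span_p_iff_coeff_zero_eq_zero]
  show constantCoeff (frobenius x - x ^ p) = 0
  rw [map_sub, map_pow, sub_eq_zero]
  exact coeff_frobenius_charP p x 0

variable {p k} {e : ℕ}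

local notation "W" => WittVector p k
local notation "B" => FractionRing (WittVector p k)
local notation "ι" => algebraMap (WittVector p k) (FractionRing (WittVector p k))

section

omit [CharP k p] [PerfectRing k p]

def pPowLattice (m : ℕ) : Submodule W B where
  carrier := {x | ∃ w : W, ι ((p : W) ^ m * w) = x}
  add_mem' := by
    rintro _ _ ⟨v, rfl⟩ ⟨w, rfl⟩
    exact ⟨v + w, by rw [mul_add, map_add]⟩
  zero_mem' := ⟨0, by simp⟩
  smul_mem' := by
    rintro c _ ⟨w, rfl⟩
    exact ⟨c * w, by rw [Algebra.smul_def, ← map_mul, mul_left_comm]⟩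

theorem mem_pPowLattice {m : ℕ} {x : B} : x ∈ pPowLattice m ↔ ∃ w : W, ι ((p : W) ^ m * w) = x :=
  Iff.rfl

theorem algebraMap_mem_pPowLattice_zero (w : W) : ι w ∈ pPowLattice 0 :=
  ⟨w, by rw [pow_zero, one_mul]⟩

theorem inW_iff_mem_pPowLattice_zero {x : B} : InW p k x ↔ x ∈ pPowLattice 0 := by
  simp [InW, mem_pPowLattice]

theorem natCast_mem_pPowLattice_zero (n : ℕ) : (n : B) ∈ pPowLattice 0 :=
  map_natCast ι n ▸ algebraMap_mem_pPowLattice_zero _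

theorem mul_mem_pPowLattice {a b : ℕ} {x y : B} (hx : x ∈ pPowLattice a)
    (hy : y ∈ pPowLattice b) : x * y ∈ pPowLattice (a + b) := by
  obtain ⟨v, rfl⟩ := hx
  obtain ⟨w, rfl⟩ := hy
  exact ⟨v * w, by rw [← map_mul, pow_add]; ring_nf⟩

theorem natCast_mul_mem_pPowLattice_succ {m : ℕ} {x : B} (hx : x ∈ pPowLattice m) :
    (p : B) * x ∈ pPowLattice (m + 1) := by
  obtain ⟨w, rfl⟩ := hx
  exact ⟨w, by rw [pow_succ', mul_assoc, map_mul _ (p : W), map_natCast]⟩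

theorem mul_mul_factorial_div_mem {i j a b : ℕ} {x y : B}
    (hx : x * (i / e)! ∈ pPowLattice a) (hy : y * (j / e)! ∈ pPowLattice b) :
    x * y * ((i + j) / e)! ∈ pPowLattice (a + b) := by
  obtain ⟨r, hr⟩ := Nat.factorial_div_mul_factorial_div_dvd i j e
  have : x * y * ((i + j) / e)! = x * (i / e)! * (y * (j / e)!) * r := by
    rw [hr]; push_cast; ring
  rw [this, ← add_zero (a + b)]
  exact mul_mem_pPowLattice (mul_mem_pPowLattice hx hy) (natCast_mem_pPowLattice_zero r)

theorem mem_pianoTilde_iff {f : B⟦X⟧} :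
    f ∈ pianoTilde p k e ↔ ∀ n, coeff n f * (n / e)! ∈ pPowLattice 0 := by
  exact forall_congr' fun _ => inW_iff_mem_pPowLattice_zero

theorem coeff_mul_mul_factorial_div_mem {f g : B⟦X⟧} {n m : ℕ}
    (h : ∀ x ∈ antidiagonal n, coeff x.1 f * coeff x.2 g * (n / e)! ∈ pPowLattice m) :
    coeff n (f * g) * (n / e)! ∈ pPowLattice m := by
  rw [coeff_mul, sum_mul]
  exact Submodule.sum_mem _ h

theorem monomial_mem_pianoTilde {j : ℕ} {x : B} (hx : x * (j / e)! ∈ pPowLattice 0) :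
    monomial j x ∈ pianoTilde p k e :=
  mem_pianoTilde_iff.mpr fun n => by
    rw [coeff_monomial]
    split_ifs with hn
    · rwa [hn]
    · simp

variable (p k) in
def pianoTildeSubring (e : ℕ) : Subring B⟦X⟧ where
  carrier := pianoTilde p k e
  zero_mem' := mem_pianoTilde_iff.mpr fun n => by simp
  one_mem' := mem_pianoTilde_iff.mpr fun n => by
    rw [coeff_one]
    split_ifs with hn
    · simpa [hn] using natCast_mem_pPowLattice_zero (p := p) (k := k) 1
    · simp
  add_mem' {f g} hf hg := mem_pianoTilde_iff.mpr fun n => by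
    rw [map_add, add_mul]
    exact add_mem (mem_pianoTilde_iff.mp hf n) (mem_pianoTilde_iff.mp hg n)
  neg_mem' {f} hf := mem_pianoTilde_iff.mpr fun n => by
    rw [map_neg, neg_mul]
    exact neg_mem (mem_pianoTilde_iff.mp hf n)
  mul_mem' {f g} hf hg := mem_pianoTilde_iff.mpr fun n =>
    coeff_mul_mul_factorial_div_mem fun x hx => by
      have := mul_mul_factorial_div_mem (mem_pianoTilde_iff.mp hf x.1)
        (mem_pianoTilde_iff.mp hg x.2)
      rwa [add_zero, mem_antidiagonal.mp hx] at this

theorem mem_pianoR_iff {f : B⟦X⟧} : f ∈ pianoR p k e ↔ f ∈ pianoTilde p k e ∧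
    ∀ m, ∃ N, ∀ n ≥ N, coeff n f * (n / e)! ∈ pPowLattice m :=
  Iff.rfl

variable (p k) in
def pianoRSubring (e : ℕ) : Subring B⟦X⟧ where
  carrier := pianoR p k e
  zero_mem' := ⟨(pianoTildeSubring p k e).zero_mem, fun m => ⟨0, fun n _ => by simp⟩⟩
  one_mem' := ⟨(pianoTildeSubring p k e).one_mem, fun m => ⟨1, fun n hn => by
    simp [coeff_one, Nat.one_le_iff_ne_zero.mp hn]⟩⟩
  add_mem' {f g} hf hg := by
    refine ⟨(pianoTildeSubring p k e).add_mem hf.1 hg.1, fun m => ?_⟩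
    obtain ⟨N₁, hN₁⟩ := (mem_pianoR_iff.mp hf).2 m
    obtain ⟨N₂, hN₂⟩ := (mem_pianoR_iff.mp hg).2 m
    refine ⟨max N₁ N₂, fun n hn => ?_⟩
    rw [map_add, add_mul]
    exact add_mem (hN₁ n (le_of_max_le_left hn)) (hN₂ n (le_of_max_le_right hn))
  neg_mem' {f} hf := by
    refine ⟨(pianoTildeSubring p k e).neg_mem hf.1, fun m => ?_⟩
    obtain ⟨N, hN⟩ := (mem_pianoR_iff.mp hf).2 m
    refine ⟨N, fun n hn => ?_⟩
    rw [map_neg, neg_mul]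
    exact neg_mem (hN n hn)
  mul_mem' {f g} hf hg := by
    refine ⟨(pianoTildeSubring p k e).mul_mem hf.1 hg.1, fun m => ?_⟩
    obtain ⟨N₁, hN₁⟩ := (mem_pianoR_iff.mp hf).2 m
    obtain ⟨N₂, hN₂⟩ := (mem_pianoR_iff.mp hg).2 m
    refine ⟨N₁ + N₂, fun n hn => coeff_mul_mul_factorial_div_mem fun x hx => ?_⟩
    have hx : x.1 + x.2 = n := mem_antidiagonal.mp hx
    rw [← hx]
    by_cases h₁ : N₁ ≤ x.1
    · simpa using mul_mul_factorial_div_mem (hN₁ x.1 h₁) (mem_pianoTilde_iff.mp hg.1 x.2)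
    · simpa using mul_mul_factorial_div_mem (mem_pianoTilde_iff.mp hf.1 x.1) (hN₂ x.2 (by omega))

end

section

omit [PerfectRing k p]

theorem natCast_p_ne_zero : (p : B) ≠ 0 := by
  rw [← map_natCast ι, Ne, map_eq_zero_iff _ (IsFractionRing.injective W B)]
  exact WittVector.p_nonzero p k

theorem inv_natCast_mul_mem_pPowLattice {m : ℕ} {x : B} (hx : x ∈ pPowLattice (m + 1)) :
    (p : B)⁻¹ * x ∈ pPowLattice m := by
  obtain ⟨w, rfl⟩ := hx
  refine ⟨w, ?_⟩
  rw [pow_succ', mul_assoc, map_mul _ (p : W), map_natCast,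
    inv_mul_cancel_left₀ natCast_p_ne_zero]

theorem natCast_mul_C_inv_mul (h : B⟦X⟧) : (p : B⟦X⟧) * (C (p : B)⁻¹ * h) = h := by
  rw [← map_natCast (C (R := B)), ← mul_assoc, ← map_mul, mul_inv_cancel₀ natCast_p_ne_zero,
    map_one, one_mul]

theorem C_inv_mul_mem_pianoTilde {h : B⟦X⟧}
    (hh : ∀ n, coeff n h * (n / e)! ∈ pPowLattice 1) :
    C (p : B)⁻¹ * h ∈ pianoTilde p k e :=
  mem_pianoTilde_iff.mpr fun n => by
    rw [coeff_C_mul, mul_assoc]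
    exact inv_natCast_mul_mem_pPowLattice (hh n)

theorem C_inv_mul_mem_pianoR {h : B⟦X⟧} (hh : ∀ n, coeff n h * (n / e)! ∈ pPowLattice 1)
    (hR : h ∈ pianoR p k e) : C (p : B)⁻¹ * h ∈ pianoR p k e := by
  refine ⟨C_inv_mul_mem_pianoTilde hh, fun m => ?_⟩
  obtain ⟨N, hN⟩ := (mem_pianoR_iff.mp hR).2 (m + 1)
  refine ⟨N, fun n hn => ?_⟩
  rw [coeff_C_mul, mul_assoc]
  exact inv_natCast_mul_mem_pPowLattice (hN n hn)

end

theorem sigmaB_algebraMap (w : W) : sigmaB p k (ι w) = ι (WittVector.frobenius w) :=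
  IsFractionRing.ringEquivOfRingEquiv_algebraMap _ w

theorem sigmaB_mem_pPowLattice {m : ℕ} {x : B} (hx : x ∈ pPowLattice m) :
    sigmaB p k x ∈ pPowLattice m := by
  obtain ⟨w, rfl⟩ := hx
  exact ⟨WittVector.frobenius w, by
    rw [sigmaB_algebraMap, map_mul WittVector.frobenius, map_pow, map_natCast]⟩

theorem sigmaB_sub_pow_mem_pPowLattice_one {x : B} (hx : x ∈ pPowLattice 0) :
    sigmaB p k x - x ^ p ∈ pPowLattice 1 := by
  obtain ⟨w, rfl⟩ := hx
  obtain ⟨u, hu⟩ := WittVector.natCast_dvd_frobenius_sub_pow (w : W)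
  refine ⟨u, ?_⟩
  rw [pow_zero, one_mul, sigmaB_algebraMap, pow_one, ← hu, map_sub, map_pow]

theorem sigmaB_mul_factorial_div_mem {j m : ℕ} {x : B} (hx : x * (j / e)! ∈ pPowLattice m) :
    sigmaB p k x * (p * j / e)! ∈ pPowLattice m := by
  obtain ⟨r, hr⟩ := Nat.factorial_dvd_factorial
    (Nat.div_le_div_right (Nat.le_mul_of_pos_left j (Fact.out : p.Prime).pos) : j / e ≤ p * j / e)
  have : sigmaB p k x * (p * j / e)! = sigmaB p k (x * (j / e)!) * r := by
    rw [hr, map_mul, map_natCast]; push_cast; ring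
  rw [this, ← add_zero m]
  exact mul_mem_pPowLattice (sigmaB_mem_pPowLattice hx) (natCast_mem_pPowLattice_zero r)

theorem sigmaB_sub_pow_mul_factorial_div_mem {j : ℕ} {x : B}
    (hx : x * (j / e)! ∈ pPowLattice 0) :
    (sigmaB p k x - x ^ p) * (p * j / e)! ∈ pPowLattice 1 := by
  have hp : p.Prime := Fact.out
  have hts : p * (j / e) ≤ p * j / e := Nat.mul_div_le_mul_div_assoc p j e
  by_cases ht : j / e = 0
  · rw [ht, Nat.factorial_zero, Nat.cast_one, mul_one] at hx
    rw [← add_zero 1]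
    exact mul_mem_pPowLattice (sigmaB_sub_pow_mem_pPowLattice_one hx)
      (natCast_mem_pPowLattice_zero _)
  · obtain ⟨c, hc⟩ := (Nat.mul_factorial_pow_dvd_factorial_mul hp.pos ht).trans
      (Nat.factorial_dvd_factorial hts)
    obtain ⟨w, hw⟩ := hx
    rw [pow_zero, one_mul] at hw
    have hσ : sigmaB p k x * (j / e)! = ι (WittVector.frobenius w) := by
      rw [← sigmaB_algebraMap, hw, map_mul, map_natCast]
    -- with `t = ⌊j/e⌋`, `(σ x - x^p) ⌊pj/e⌋! = p c (σ(x t!) (t!)^(p-1) - (x t!)^p)`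
    refine ⟨c * (WittVector.frobenius w * (j / e)! ^ (p - 1) - w ^ p), ?_⟩
    have hpow : ((j / e)! : B) ^ (p - 1) * (j / e)! = ((j / e)! : B) ^ p := by
      rw [← pow_succ, Nat.sub_add_cancel hp.one_le]
    simp only [map_mul, map_sub, map_pow, map_natCast]
    rw [← hσ, hw, hc]
    push_cast
    linear_combination ((p : B) * c * sigmaB p k x) * hpow

variable (p k) in
def FmapRingHom : B⟦X⟧ →+* B⟦X⟧ :=
  (expand p (Fact.out : p.Prime).ne_zero).toRingHom.comp (map (sigmaB p k).toRingHom)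

theorem coeff_Fmap (f : B⟦X⟧) (n : ℕ) :
    coeff n (Fmap p k f) = if p ∣ n then sigmaB p k (coeff (n / p) f) else 0 :=
  coeff_mk _ _

theorem FmapRingHom_apply (f : B⟦X⟧) : FmapRingHom p k f = Fmap p k f := by
  ext n
  simp [FmapRingHom, coeff_Fmap, coeff_expand]

theorem Fmap_one : Fmap p k 1 = 1 := by
  rw [← FmapRingHom_apply, map_one]

theorem Fmap_add (f g : B⟦X⟧) : Fmap p k (f + g) = Fmap p k f + Fmap p k g := by
  simp only [← FmapRingHom_apply, map_add]

theorem Fmap_mul (f g : B⟦X⟧) : Fmap p k (f * g) = Fmap p k f * Fmap p k g := by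
  simp only [← FmapRingHom_apply, map_mul]

theorem Fmap_monomial (j : ℕ) (x : B) :
    Fmap p k (monomial j x) = monomial (p * j) (sigmaB p k x) := by
  have hp : 0 < p := (Fact.out : p.Prime).pos
  ext n
  simp only [coeff_Fmap, coeff_monomial]
  by_cases hd : p ∣ n
  · obtain ⟨q, rfl⟩ := hd
    simp [Nat.mul_div_cancel_left q hp, Nat.mul_left_cancel_iff hp, apply_ite (sigmaB p k)]
  · have hn : n ≠ p * j := by rintro rfl; exact hd (dvd_mul_right p j)
    simp [hd, hn]

theorem FmapRingHom_X : FmapRingHom p k X = X ^ p := by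
  simp [FmapRingHom]

theorem coeff_Fmap_mul_factorial_div_mem {f : B⟦X⟧} {m N : ℕ}
    (hf : ∀ n ≥ N, coeff n f * (n / e)! ∈ pPowLattice m) :
    ∀ n ≥ p * N, coeff n (Fmap p k f) * (n / e)! ∈ pPowLattice m := by
  have hp : 0 < p := (Fact.out : p.Prime).pos
  intro n hn
  rw [coeff_Fmap]
  split_ifs with hd
  · obtain ⟨q, rfl⟩ := hd
    rw [Nat.mul_div_cancel_left q hp]
    exact sigmaB_mul_factorial_div_mem (hf q (Nat.le_of_mul_le_mul_left hn hp))
  · simp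

theorem Fmap_mem_pianoTilde {f : B⟦X⟧} (hf : f ∈ pianoTilde p k e) :
    Fmap p k f ∈ pianoTilde p k e :=
  mem_pianoTilde_iff.mpr fun n => coeff_Fmap_mul_factorial_div_mem (N := 0)
    (fun n _ => mem_pianoTilde_iff.mp hf n) n (Nat.zero_le _)

theorem Fmap_mem_pianoR {f : B⟦X⟧} (hf : f ∈ pianoR p k e) : Fmap p k f ∈ pianoR p k e :=
  ⟨Fmap_mem_pianoTilde hf.1, fun m =>
    let ⟨N, hN⟩ := (mem_pianoR_iff.mp hf).2 m
    ⟨p * N, coeff_Fmap_mul_factorial_div_mem hN⟩⟩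

theorem Fmap_monomial_sub_pow {j : ℕ} {x : B} (hx : x * (j / e)! ∈ pPowLattice 0) :
    ∃ g ∈ pianoTilde p k e, Fmap p k (monomial j x) - monomial j x ^ p = p * g := by
  refine ⟨monomial (p * j) ((p : B)⁻¹ * (sigmaB p k x - x ^ p)), monomial_mem_pianoTilde ?_, ?_⟩
  · rw [mul_assoc]
    exact inv_natCast_mul_mem_pPowLattice (sigmaB_sub_pow_mul_factorial_div_mem hx)
  · rw [Fmap_monomial, monomial_pow, mul_comm p j, ← map_sub, ← natCast_mul_C_inv_mul
      (monomial (j * p) _), ← smul_eq_C_mul, ← map_smul, smul_eq_mul]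

variable (p k) in
def FmapPianoTilde (e : ℕ) : pianoTildeSubring p k e →+* pianoTildeSubring p k e :=
  (FmapRingHom p k).restrict _ _ fun f hf => (FmapRingHom_apply f).symm ▸ Fmap_mem_pianoTilde hf

theorem coe_FmapPianoTilde (f : pianoTildeSubring p k e) :
    (FmapPianoTilde p k e f : B⟦X⟧) = Fmap p k f :=
  FmapRingHom_apply _

theorem natCast_dvd_FmapPianoTilde_sub_pow_iff {f : pianoTildeSubring p k e} :
    (p : pianoTildeSubring p k e) ∣ FmapPianoTilde p k e f - f ^ p ↔
      ∃ g ∈ pianoTilde p k e, Fmap p k f - (f : B⟦X⟧) ^ p = p * g := by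
  constructor
  · rintro ⟨⟨g, hg⟩, hfg⟩
    exact ⟨g, hg, by simpa [coe_FmapPianoTilde] using congrArg Subtype.val hfg⟩
  · rintro ⟨g, hg, hfg⟩
    exact ⟨⟨g, hg⟩, Subtype.ext (by simpa [coe_FmapPianoTilde] using hfg)⟩

theorem coeff_Fmap_sub_pow_mul_factorial_div_mem {f : B⟦X⟧} (hf : f ∈ pianoTilde p k e) (n : ℕ) :
    coeff n (Fmap p k f - f ^ p) * (n / e)! ∈ pPowLattice 1 := by
  let trunc (j : ℕ) : pianoTildeSubring p k e :=
    ⟨monomial j (coeff j f), monomial_mem_pianoTilde (mem_pianoTilde_iff.mp hf j)⟩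
  obtain ⟨g, hg, hfg⟩ := natCast_dvd_FmapPianoTilde_sub_pow_iff.mp <|
    natCast_dvd_map_sum_sub_sum_pow (Fact.out : p.Prime) (FmapPianoTilde p k e).toAddMonoidHom
      (range (n + 1)) trunc fun j _ => natCast_dvd_FmapPianoTilde_sub_pow_iff.mpr <|
        Fmap_monomial_sub_pow (mem_pianoTilde_iff.mp hf j)
  push_cast [trunc] at hfg
  have hX := X_pow_dvd_map_sub_pow_sub_map_sub_pow (FmapRingHom p k)
    (by rw [FmapRingHom_X]; exact dvd_pow_self X (Fact.out : p.Prime).ne_zero) p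
    (X_pow_dvd_sub_sum_monomial f (n + 1))
  simp only [FmapRingHom_apply, hfg] at hX
  have hcoeff := X_pow_dvd_iff.mp hX n n.lt_succ_self
  rw [map_sub, sub_eq_zero, ← map_natCast (C (R := B)), coeff_C_mul] at hcoeff
  rw [hcoeff, mul_assoc]
  exact natCast_mul_mem_pPowLattice_succ (mem_pianoTilde_iff.mp hg n)

theorem Fmap_ringHom_and_frobeniusLift_general (e : ℕ) :
    -- `F` is a ring endomorphism of `B(k)[[T]]`:
    (Fmap p k (1 : PowerSeries (FractionRing (WittVector p k))) = 1) ∧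
    (∀ f g : PowerSeries (FractionRing (WittVector p k)),
      Fmap p k (f + g) = Fmap p k f + Fmap p k g) ∧
    (∀ f g : PowerSeries (FractionRing (WittVector p k)),
      Fmap p k (f * g) = Fmap p k f * Fmap p k g) ∧
    -- `F` maps `R̃e(k)` into `R̃e(k)` and `Re(k)` into `Re(k)`:
    (∀ f ∈ pianoTilde p k e, Fmap p k f ∈ pianoTilde p k e) ∧
    (∀ f ∈ pianoR p k e, Fmap p k f ∈ pianoR p k e) ∧
    -- the restriction is a Frobenius lift:
    (∀ f ∈ pianoTilde p k e, ∃ g ∈ pianoTilde p k e,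
      Fmap p k f - f ^ p = (p : PowerSeries (FractionRing (WittVector p k))) * g) ∧
    (∀ f ∈ pianoR p k e, ∃ g ∈ pianoR p k e,
      Fmap p k f - f ^ p = (p : PowerSeries (FractionRing (WittVector p k))) * g) := by
  refine ⟨Fmap_one, Fmap_add, Fmap_mul, fun f => Fmap_mem_pianoTilde, fun f => Fmap_mem_pianoR,
    fun f hf => ?_, fun f hf => ?_⟩
  · exact ⟨_, C_inv_mul_mem_pianoTilde (coeff_Fmap_sub_pow_mul_factorial_div_mem hf),
      (natCast_mul_C_inv_mul _).symm⟩
  · have hR : Fmap p k f - f ^ p ∈ pianoRSubring p k e :=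
      sub_mem (Fmap_mem_pianoR hf) (pow_mem (show f ∈ pianoRSubring p k e from hf) p)
    exact ⟨_, C_inv_mul_mem_pianoR (coeff_Fmap_sub_pow_mul_factorial_div_mem hf.1) hR,
      (natCast_mul_C_inv_mul _).symm⟩

/-- For every `e ≥ 1`, the `σ`-semilinear substitution `F` (determined by
`T ↦ T^p`) is a ring endomorphism of `B(k)[[T]]` that maps `R̃e(k)` into `R̃e(k)` and `Re(k)`
into `Re(k)`; moreover its restriction `Φ` to either piano ring is a Frobenius lift:
`Φ(f) − f^p ∈ p·R̃e(k)` for every `f ∈ R̃e(k)`, and `Φ(f) − f^p ∈ p·Re(k)` for every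
`f ∈ Re(k)`. -/
theorem Fmap_ringHom_and_frobeniusLift (e : ℕ) (he : 1 ≤ e) :
    -- `F` is a ring endomorphism of `B(k)[[T]]`:
    (Fmap p k (1 : PowerSeries (FractionRing (WittVector p k))) = 1) ∧
    (∀ f g : PowerSeries (FractionRing (WittVector p k)),
      Fmap p k (f + g) = Fmap p k f + Fmap p k g) ∧
    (∀ f g : PowerSeries (FractionRing (WittVector p k)),
      Fmap p k (f * g) = Fmap p k f * Fmap p k g) ∧
    -- `F` maps `R̃e(k)` into `R̃e(k)` and `Re(k)` into `Re(k)`: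
    (∀ f ∈ pianoTilde p k e, Fmap p k f ∈ pianoTilde p k e) ∧
    (∀ f ∈ pianoR p k e, Fmap p k f ∈ pianoR p k e) ∧
    -- the restriction is a Frobenius lift:
    (∀ f ∈ pianoTilde p k e, ∃ g ∈ pianoTilde p k e,
      Fmap p k f - f ^ p = (p : PowerSeries (FractionRing (WittVector p k))) * g) ∧
    (∀ f ∈ pianoR p k e, ∃ g ∈ pianoR p k e,
      Fmap p k f - f ^ p = (p : PowerSeries (FractionRing (WittVector p k))) * g) :=
  Fmap_ringHom_and_frobeniusLift_general e
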